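/- For any integer c ≥ 3, the c-forced gadget F_c admits a c-gel, and for any good edge-labeling λ : E(F_c) → {1, …, c} of F_c, the label of the bone of F_c satisfies λ(v v_1) ∈ {1, c}. -/

import Mathlib

/-!
The `c`-gel labels `v v_i` by `i` and every other edge by `1` or `c`, in such a way that the edges
labelled `1` form a star forest, and so do the edges labelled `c`. An increasing path then runs
through a path of the first forest, a path in the star of the middle edges `v v_i` (`i ≥ 2`), and
a path of the second forest. Paths in a star forest are unique, and a vertex is determined by the
centres of its two stars; this pins down where an increasing path enters and leaves the middle
star, hence the whole path.

Conversely, in a good labeling the `4`-cycles `v v_i v_{i,j} v_j` force the labels of the `c - 1`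
edges `v v_i` to be distinct. In the extremal gadget on `v v_i` (`i ≥ 2`), a bone labelled `1` or
`c` would produce an increasing path of length `2` and one of length `3` between the same
vertices. So the `c - 2` edges `v v_i` with `i ≥ 2` use up the labels `2, …, c - 1`, and the bone
`v v_1` gets `1` or `c`.
-/

/-- A walk is *increasing* with respect to an edge-labeling if the sequence of labels of its
edges, traversed from the first endpoint to the last, is non-decreasing. -/
def IsIncreasing {V : Type*} (G : SimpleGraph V) (lab : Sym2 V → ℝ) {x y : V}
    (p : G.Walk x y) : Prop :=
  (p.edges.map lab).Chain' (· ≤ ·)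

/-- An edge-labeling is *good* if for every ordered pair `(x, y)` of vertices there do not
exist two distinct increasing paths from `x` to `y`. -/
def IsGoodLabeling {V : Type*} (G : SimpleGraph V) (lab : Sym2 V → ℝ) : Prop :=
  ∀ (x y : V) (p q : G.Walk x y), p.IsPath → q.IsPath →
    IsIncreasing G lab p → IsIncreasing G lab q → p = q

/-- The vertices of the `c`-forced gadget `F_c`:
* `Sum.inl ()` is the vertex `v` of the `(c-1)`-color gadget `D_{c-1}`;
* `Sum.inr (Sum.inl i)` for `i : Fin (c-1)` is the vertex `v_{i+1}` of `D_{c-1}`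
  (so index `0` corresponds to `v_1`);
* `Sum.inr (Sum.inr (Sum.inl p))` with `p.1 < p.2` is the vertex `v_{i,j}` of `D_{c-1}`;
* `Sum.inr (Sum.inr (Sum.inr (x, t)))`, for `x : {i : Fin (c-1) // i.val ≠ 0}` and `t : Fin 5`,
  are the five extra vertices of the copy `X_{x+1}` of the extremal gadget whose bone is
  identified with the edge `v v_{x+1}`: `t = 0` is the vertex `a` of `X_{x+1}`, `t = 1, 2`
  are the two middle vertices of the two `2`-paths from `a` to `v`, and `t = 3, 4` are the
  two middle vertices of the two `2`-paths from `a` to `v_{x+1}`. -/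
def FVert (c : ℕ) : Type :=
  Unit ⊕ Fin (c - 1) ⊕ {p : Fin (c - 1) × Fin (c - 1) // p.1 < p.2} ⊕
    ({i : Fin (c - 1) // i.val ≠ 0} × Fin 5)

/-- The `c`-forced gadget `F_c`: the `(c-1)`-color gadget `D_{c-1}` where, for each
`i ∈ {2, …, c-1}`, the edge `v v_i` is identified with the bone of a copy of the extremal
gadget. Its bone is the edge `v v_1`. -/
def FGadget (c : ℕ) : SimpleGraph (FVert c) :=
  SimpleGraph.fromRel (fun a b =>
    (∃ i : Fin (c - 1), a = Sum.inl () ∧ b = Sum.inr (Sum.inl i)) ∨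
    (∃ (i : Fin (c - 1)) (p : {p : Fin (c - 1) × Fin (c - 1) // p.1 < p.2}),
      a = Sum.inr (Sum.inl i) ∧ b = Sum.inr (Sum.inr (Sum.inl p)) ∧
      (p.val.1 = i ∨ p.val.2 = i)) ∨
    (∃ (x : {i : Fin (c - 1) // i.val ≠ 0}) (t : Fin 5), t ≠ 0 ∧
      a = Sum.inr (Sum.inr (Sum.inr (x, 0))) ∧ b = Sum.inr (Sum.inr (Sum.inr (x, t)))) ∨
    (∃ (x : {i : Fin (c - 1) // i.val ≠ 0}) (t : Fin 5), (t = 1 ∨ t = 2) ∧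
      a = Sum.inr (Sum.inr (Sum.inr (x, t))) ∧ b = Sum.inl ()) ∨
    (∃ (x : {i : Fin (c - 1) // i.val ≠ 0}) (t : Fin 5), (t = 3 ∨ t = 4) ∧
      a = Sum.inr (Sum.inr (Sum.inr (x, t))) ∧ b = Sum.inr (Sum.inl x.val)))

-- Lets `simp` see that vertices built from different `Sum` constructors are distinct.
attribute [reducible] FVert

section Labelings

open SimpleGraph

variable {V : Type*} {G : SimpleGraph V} {lab : Sym2 V → ℝ}

lemma isIncreasing_iff {x y : V} (p : G.Walk x y) :
    IsIncreasing G lab p ↔ (p.edges.map lab).IsChain (· ≤ ·) :=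
  Iff.rfl

namespace IsIncreasing

variable {x y z : V}

lemma of_cons {h : G.Adj x y} {p : G.Walk y z} (hp : IsIncreasing G lab (.cons h p)) :
    IsIncreasing G lab p :=
  ((isIncreasing_iff _).mp hp).tail

lemma of_append_left {p : G.Walk x y} {q : G.Walk y z} (h : IsIncreasing G lab (p.append q)) :
    IsIncreasing G lab p := by
  rw [isIncreasing_iff, Walk.edges_append, List.map_append] at h
  exact h.left_of_append

lemma of_append_right {p : G.Walk x y} {q : G.Walk y z} (h : IsIncreasing G lab (p.append q)) :
    IsIncreasing G lab q := by
  rw [isIncreasing_iff, Walk.edges_append, List.map_append] at h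
  exact h.right_of_append

lemma cons_cons_nil_iff {h : G.Adj x y} {h' : G.Adj y z} :
    IsIncreasing G lab (.cons h (.cons h' .nil)) ↔ lab s(x, y) ≤ lab s(y, z) := by
  simp [isIncreasing_iff]

lemma le_of_mem_edges_cons {h : G.Adj x y} {p : G.Walk y z}
    (hp : IsIncreasing G lab (.cons h p)) {e : Sym2 V} (he : e ∈ p.edges) :
    lab s(x, y) ≤ lab e := by
  rw [isIncreasing_iff, Walk.edges_cons, List.map_cons, List.isChain_iff_pairwise,
    List.pairwise_cons] at hp
  exact hp.1 _ (List.mem_map_of_mem he)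

lemma exists_eq_append (t : ℝ) {p : G.Walk x y} (hp : IsIncreasing G lab p) :
    ∃ (u : V) (q : G.Walk x u) (r : G.Walk u y), p = q.append r ∧
      (∀ e ∈ q.edges, lab e < t) ∧ ∀ e ∈ r.edges, t ≤ lab e := by
  induction p with
  | nil => exact ⟨_, .nil, .nil, rfl, by simp, by simp⟩
  | @cons x y z h p ih =>
    by_cases hlt : lab s(x, y) < t
    · obtain ⟨u, q, r, rfl, hq, hr⟩ := ih hp.of_cons
      refine ⟨u, .cons h q, r, rfl, ?_, hr⟩
      simpa [hlt] using hq
    · refine ⟨x, .nil, .cons h p, rfl, by simp, ?_⟩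
      simp only [Walk.edges_cons, List.mem_cons, forall_eq_or_imp]
      exact ⟨not_lt.mp hlt, fun e he => (not_lt.mp hlt).trans (hp.le_of_mem_edges_cons he)⟩

end IsIncreasing

lemma isIncreasing_neg_iff {x y : V} (p : G.Walk x y) :
    IsIncreasing G (-lab) p ↔ IsIncreasing G lab p.reverse := by
  simp [isIncreasing_iff, Walk.edges_reverse, List.isChain_reverse, List.isChain_map]

namespace IsGoodLabeling

lemma neg (h : IsGoodLabeling G lab) : IsGoodLabeling G (-lab) := by
  intro x y p q hp hq hip hiq
  rw [isIncreasing_neg_iff] at hip hiq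
  simpa using congrArg Walk.reverse (h y x _ _ hp.reverse hq.reverse hip hiq)

variable {a b m m' m'' : V}

lemma not_le_and_le (h : IsGoodLabeling G lab) (ham : G.Adj a m) (hmb : G.Adj m b)
    (ham' : G.Adj a m') (hm'b : G.Adj m' b) (hab : a ≠ b) (hmm' : m ≠ m') :
    ¬ (lab s(a, m) ≤ lab s(m, b) ∧ lab s(a, m') ≤ lab s(m', b)) := by
  rintro ⟨hle, hle'⟩
  have hpath {n} (h₁ : G.Adj a n) (h₂ : G.Adj n b) :
      (Walk.cons h₁ (.cons h₂ .nil)).IsPath := by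
    simp [Walk.cons_isPath_iff, hab, h₁.ne, h₂.ne]
  have := h a b _ _ (hpath ham hmb) (hpath ham' hm'b)
    (IsIncreasing.cons_cons_nil_iff.mpr hle) (IsIncreasing.cons_cons_nil_iff.mpr hle')
  simp_all

lemma ne_of_cycle (h : IsGoodLabeling G lab) (ham : G.Adj a m) (hmb : G.Adj m b)
    (ham' : G.Adj a m') (hm'b : G.Adj m' b) (hab : a ≠ b) (hmm' : m ≠ m') :
    lab s(a, m) ≠ lab s(m, b) := by
  intro heq
  rcases le_total (lab s(a, m')) (lab s(m', b)) with hle | hle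
  · exact h.not_le_and_le ham hmb ham' hm'b hab hmm' ⟨heq.le, hle⟩
  · refine h.not_le_and_le hmb.symm ham.symm hm'b.symm ham'.symm hab.symm hmm' ⟨?_, ?_⟩
    · rw [Sym2.eq_swap, ← heq, Sym2.eq_swap]
    · rwa [Sym2.eq_swap (a := b), Sym2.eq_swap (a := m') (b := a)]

lemma not_le_and_le_and_le (h : IsGoodLabeling G lab) (ham : G.Adj a m) (hmb : G.Adj m b)
    (ham' : G.Adj a m') (hm'm'' : G.Adj m' m'') (hm''b : G.Adj m'' b)
    (hab : a ≠ b) (ham'' : a ≠ m'') (hm'b : m' ≠ b) :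
    ¬ (lab s(a, m) ≤ lab s(m, b) ∧ lab s(a, m') ≤ lab s(m', m'') ∧
      lab s(m', m'') ≤ lab s(m'', b)) := by
  rintro ⟨hle, hle', hle''⟩
  have hp : (Walk.cons ham (.cons hmb .nil)).IsPath := by
    simp [Walk.cons_isPath_iff, hab, ham.ne, hmb.ne]
  have hq : (Walk.cons ham' (.cons hm'm'' (.cons hm''b .nil))).IsPath := by
    simp [Walk.cons_isPath_iff, hab, ham'.ne, hm'm''.ne, hm''b.ne, ham'', hm'b]
  have := h a b _ _ hp hq (IsIncreasing.cons_cons_nil_iff.mpr hle)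
    (by simp [isIncreasing_iff, hle', hle''])
  simpa using congrArg Walk.length this

end IsGoodLabeling

/-- `z z'` is an edge of the star forest whose stars are the fibres of `f`, each centred at the
fixed point of `f` it contains. -/
def IsStarEdge (f : V → V) (z z' : V) : Prop :=
  f z = f z' ∧ (f z = z ∨ f z' = z')

lemma IsStarEdge.symm {f : V → V} {z z' : V} (h : IsStarEdge f z z') : IsStarEdge f z' z :=
  ⟨h.1.symm, h.2.symm⟩

namespace SimpleGraph.Walk

variable {f : V → V} {x y z : V}

lemma apply_eq_of_isStarEdge (p : G.Walk x y) (hp : ∀ d ∈ p.darts, IsStarEdge f d.fst d.snd) :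
    f x = f y := by
  induction p with
  | nil => rfl
  | cons h p ih =>
    simp only [darts_cons, List.mem_cons, forall_eq_or_imp] at hp
    exact hp.1.1.trans (ih hp.2)

lemma snd_eq_of_isStarEdge_of_apply_eq {h : G.Adj x z} {p : G.Walk z y}
    (hpath : (cons h p).IsPath) (hp : ∀ d ∈ (cons h p).darts, IsStarEdge f d.fst d.snd)
    (hx : f x = x) : z = y := by
  cases p with
  | nil => rfl
  | @cons _ z₂ _ h₂ p =>
    simp only [darts_cons, List.mem_cons, forall_eq_or_imp] at hp
    obtain ⟨⟨hxz, -⟩, ⟨hzz₂, hcentre⟩, -⟩ := hp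
    have hz₂ : z₂ = x := by
      rcases hcentre with hz | hz
      · exact absurd (hz.symm.trans (hxz.symm.trans hx)) h.ne.symm
      · rw [← hz, ← hzz₂, ← hxz, hx]
    subst hz₂
    simp [cons_isPath_iff] at hpath

lemma snd_eq_apply_of_isStarEdge {h : G.Adj x z} {p : G.Walk z y}
    (hp : ∀ d ∈ (cons h p).darts, IsStarEdge f d.fst d.snd) (hx : f x ≠ x) : z = f x := by
  simp only [darts_cons, List.mem_cons, forall_eq_or_imp] at hp
  obtain ⟨⟨hxz, hz | hz⟩, -⟩ := hp
  · exact absurd hz hx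
  · rw [hxz, hz]

theorem IsPath.eq_of_isStarEdge {p q : G.Walk x y} (hp : p.IsPath) (hq : q.IsPath)
    (hpf : ∀ d ∈ p.darts, IsStarEdge f d.fst d.snd)
    (hqf : ∀ d ∈ q.darts, IsStarEdge f d.fst d.snd) : p = q := by
  induction p with
  | nil => exact (isPath_iff_nil.mp hq).eq_nil.symm
  | @cons x _ _ h p ih =>
    cases q with
    | nil => simp at hp
    | cons h' q =>
      obtain rfl : _ = _ := by
        by_cases hx : f x = x
        · exact (snd_eq_of_isStarEdge_of_apply_eq hp hpf hx).trans
            (snd_eq_of_isStarEdge_of_apply_eq hq hqf hx).symm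
        · exact (snd_eq_apply_of_isStarEdge hpf hx).trans (snd_eq_apply_of_isStarEdge hqf hx).symm
      simp only [darts_cons, List.mem_cons, forall_eq_or_imp] at hpf hqf
      rw [ih hp.of_cons hq.of_cons hpf.2 hqf.2]

end SimpleGraph.Walk

end Labelings

namespace FVert

variable {c : ℕ}

def v : FVert c := Sum.inl ()
def vi (i : Fin (c - 1)) : FVert c := Sum.inr (Sum.inl i)
def vij (p : {p : Fin (c - 1) × Fin (c - 1) // p.1 < p.2}) : FVert c :=
  Sum.inr (Sum.inr (Sum.inl p))
def gad (x : {i : Fin (c - 1) // i.val ≠ 0}) (t : Fin 5) : FVert c :=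
  Sum.inr (Sum.inr (Sum.inr (x, t)))

end FVert

namespace FGadget

open SimpleGraph FVert

variable {c : ℕ} {x y u w u' w' : FVert c} {lab : Sym2 (FVert c) → ℝ}

lemma adj_v_vi (i : Fin (c - 1)) : (FGadget c).Adj v (vi i) := by
  rw [FGadget, fromRel_adj]
  exact ⟨by simp [v, vi], .inl (.inl ⟨i, rfl, rfl⟩)⟩

lemma adj_vi_vij {i : Fin (c - 1)} {p : {p : Fin (c - 1) × Fin (c - 1) // p.1 < p.2}}
    (h : p.1.1 = i ∨ p.1.2 = i) : (FGadget c).Adj (vi i) (vij p) := by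
  rw [FGadget, fromRel_adj]
  exact ⟨by simp [vi, vij], .inl (.inr (.inl ⟨i, p, rfl, rfl, h⟩))⟩

lemma adj_gad_zero {x : {i : Fin (c - 1) // i.val ≠ 0}} {t : Fin 5} (ht : t ≠ 0) :
    (FGadget c).Adj (gad x 0) (gad x t) := by
  rw [FGadget, fromRel_adj]
  exact ⟨by simp [gad, Ne.symm ht], .inl (.inr (.inr (.inl ⟨x, t, ht, rfl, rfl⟩)))⟩

lemma adj_gad_v {x : {i : Fin (c - 1) // i.val ≠ 0}} {t : Fin 5} (ht : t = 1 ∨ t = 2) :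
    (FGadget c).Adj (gad x t) v := by
  rw [FGadget, fromRel_adj]
  exact ⟨by simp [gad, v], .inl (.inr (.inr (.inr (.inl ⟨x, t, ht, rfl, rfl⟩))))⟩

lemma adj_gad_vi {x : {i : Fin (c - 1) // i.val ≠ 0}} {t : Fin 5} (ht : t = 3 ∨ t = 4) :
    (FGadget c).Adj (gad x t) (vi x) := by
  rw [FGadget, fromRel_adj]
  exact ⟨by simp [gad, vi], .inl (.inr (.inr (.inr (.inr ⟨x, t, ht, rfl, rfl⟩))))⟩

@[elab_as_elim]
lemma adj_rec {P : FVert c → FVert c → Prop} (hP : ∀ {z z'}, P z z' → P z' z)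
    (hv : ∀ i, P v (vi i)) (hvi : ∀ i p, p.1.1 = i ∨ p.1.2 = i → P (vi i) (vij p))
    (hgad : ∀ x t, t ≠ 0 → P (gad x 0) (gad x t))
    (hgad_v : ∀ x t, t = 1 ∨ t = 2 → P (gad x t) v)
    (hgad_vi : ∀ x t, t = 3 ∨ t = 4 → P (gad x t) (vi x)) {z z' : FVert c}
    (h : (FGadget c).Adj z z') : P z z' := by
  rw [FGadget, fromRel_adj] at h
  obtain ⟨-, h | h⟩ := h
  on_goal 2 => apply hP
  all_goals
    rcases h with ⟨i, rfl, rfl⟩ | ⟨i, p, rfl, rfl, hp⟩ | ⟨x, t, ht, rfl, rfl⟩ |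
      ⟨x, t, ht, rfl, rfl⟩ | ⟨x, t, ht, rfl, rfl⟩
    exacts [hv i, hvi i p hp, hgad x t ht, hgad_v x t ht, hgad_vi x t ht]

def gelAux (c : ℕ) : FVert c → FVert c → ℝ
  | Sum.inl _, Sum.inr (Sum.inl i) | Sum.inr (Sum.inl i), Sum.inl _ => i.val + 1
  | Sum.inr (Sum.inl i), Sum.inr (Sum.inr (Sum.inl p))
  | Sum.inr (Sum.inr (Sum.inl p)), Sum.inr (Sum.inl i) => if p.1.1 = i then c else 1
  | Sum.inr (Sum.inr (Sum.inr (_, s))), Sum.inr (Sum.inr (Sum.inr (_, t))) =>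
    if s = 0 ∧ (t = 1 ∨ t = 3) ∨ t = 0 ∧ (s = 1 ∨ s = 3) then c else 1
  | Sum.inr (Sum.inr (Sum.inr (_, t))), _ | _, Sum.inr (Sum.inr (Sum.inr (_, t))) =>
    if t = 2 ∨ t = 4 then c else 1
  | _, _ => 1

lemma gelAux_comm (z z' : FVert c) : gelAux c z z' = gelAux c z' z := by
  rcases z with _ | _ | _ | ⟨_, s⟩ <;> rcases z' with _ | _ | _ | ⟨_, t⟩ <;>
    simp only [gelAux, or_comm]

def gel (c : ℕ) : Sym2 (FVert c) → ℝ :=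
  Sym2.lift ⟨gelAux c, gelAux_comm⟩

@[simp] lemma gel_mk (z z' : FVert c) : gel c s(z, z') = gelAux c z z' := rfl

/-- The centre of the star of label-`1` edges through a vertex. -/
def lowCenter : FVert c → FVert c
  | Sum.inl _ => v
  | Sum.inr (Sum.inl i) => if i.val = 0 then v else vi i
  | Sum.inr (Sum.inr (Sum.inl p)) => vi p.1.2
  | Sum.inr (Sum.inr (Sum.inr (x, t))) => if t = 1 then v else if t = 3 then vi x else gad x 0

/-- The centre of the star of label-`c` edges through a vertex. -/
def highCenter : FVert c → FVert c
  | Sum.inl _ => v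
  | Sum.inr (Sum.inl i) => vi i
  | Sum.inr (Sum.inr (Sum.inl p)) => vi p.1.1
  | Sum.inr (Sum.inr (Sum.inr (x, t))) => if t = 2 then v else if t = 4 then vi x else gad x 0

/-- The vertices `v, v_2, …, v_{c-1}` spanned by the edges with labels in `[2, c - 1]`. -/
def IsMid (z : FVert c) : Prop :=
  z = v ∨ ∃ i : Fin (c - 1), i.val ≠ 0 ∧ z = vi i

def IsMidEdge (z z' : FVert c) : Prop :=
  IsStarEdge (fun _ => v) z z' ∧ IsMid z ∧ IsMid z'

lemma edge_trichotomy {z z' : FVert c} (h : (FGadget c).Adj z z') :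
    (gel c s(z, z') = 1 ∧ IsStarEdge lowCenter z z') ∨
    (2 ≤ gel c s(z, z') ∧ gel c s(z, z') < c ∧ IsMidEdge z z') ∨
    (gel c s(z, z') = c ∧ IsStarEdge highCenter z z') := by
  refine adj_rec (fun h => ?_) (fun i => ?_) (fun i p hp => ?_) (fun x t ht => ?_)
    (fun x t ht => ?_) (fun x t ht => ?_) h
  · rw [Sym2.eq_swap]
    rcases h with ⟨h₁, h₂⟩ | ⟨h₁, h₂, h₃, h₄, h₅⟩ | ⟨h₁, h₂⟩
    exacts [.inl ⟨h₁, h₂.symm⟩, .inr (.inl ⟨h₁, h₂, h₃.symm, h₅, h₄⟩),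
      .inr (.inr ⟨h₁, h₂.symm⟩)]
  · by_cases hi : i.val = 0
    · left
      simp [IsStarEdge, lowCenter, gelAux, v, vi, hi]
    · right; left
      have := i.isLt
      refine ⟨?_, ?_, ?_, .inl rfl, .inr ⟨i, hi, rfl⟩⟩
      · simp only [gel_mk, gelAux, v, vi]; norm_cast; omega
      · simp only [gel_mk, gelAux, v, vi]; norm_cast; omega
      · simp [IsStarEdge]
  · rcases hp with rfl | rfl
    · right; right
      simp [IsStarEdge, highCenter, gelAux, vi, vij]
    · left
      have hp₂ : p.1.2.val ≠ 0 := ((Nat.zero_le _).trans_lt p.2).ne'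
      simp [IsStarEdge, lowCenter, gelAux, vi, vij, p.2.ne, hp₂]
  · fin_cases t
    all_goals simp [IsStarEdge, lowCenter, highCenter, gelAux, gad]
  · rcases ht with rfl | rfl
    all_goals simp [IsStarEdge, lowCenter, highCenter, gelAux, gad, v]
  · rcases ht with rfl | rfl
    all_goals simp [IsStarEdge, lowCenter, highCenter, gelAux, gad, vi, x.2]

lemma IsMid.lowCenter_eq {z : FVert c} (h : IsMid z) : lowCenter z = z := by
  rcases h with rfl | ⟨i, hi, rfl⟩ <;> simp [lowCenter, v, vi, *]

lemma IsMid.highCenter_eq {z : FVert c} (h : IsMid z) : highCenter z = z := by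
  rcases h with rfl | ⟨i, hi, rfl⟩ <;> simp [highCenter, v, vi]

lemma eq_of_lowCenter_eq_of_highCenter_eq {z z' : FVert c} (h₁ : lowCenter z = lowCenter z')
    (h₂ : highCenter z = highCenter z') : z = z' := by
  rcases z with _ | i | p | ⟨x, t⟩ <;> rcases z' with _ | i' | p' | ⟨x', t'⟩ <;>
    simp only [lowCenter, highCenter] at h₁ h₂ <;> (try split_ifs at h₁ h₂) <;>
    simp_all [v, vi, gad]
  · exact p'.2.ne h₁
  · exact p.2.ne (h₂.trans h₁.symm)
  · exact Subtype.ext (Prod.ext h₂ h₁)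
  · omega

lemma exists_lt_of_isMid {z : FVert c} (hlow : IsMid (lowCenter z)) (hhigh : IsMid (highCenter z))
    (hne : lowCenter z ≠ highCenter z) :
    ∃ i j : Fin (c - 1), lowCenter z = vi i ∧ highCenter z = vi j ∧ j < i := by
  rcases z with _ | i | p | ⟨x, t⟩
  · exact absurd rfl hne
  · by_cases hi : i.val = 0
    · simp [highCenter, IsMid, v, vi, hi] at hhigh
    · simp [lowCenter, highCenter, hi] at hne
  · exact ⟨p.1.2, p.1.1, rfl, rfl, p.2⟩
  · fin_cases t <;> simp [lowCenter, highCenter, IsMid, v, vi, gad] at hlow hhigh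

lemma exists_eq_append_append (hc : 2 ≤ c) {p : (FGadget c).Walk x y}
    (hp : IsIncreasing (FGadget c) (gel c) p) :
    ∃ (u w : FVert c) (p₁ : (FGadget c).Walk x u) (p₂ : (FGadget c).Walk u w)
      (p₃ : (FGadget c).Walk w y), p = p₁.append (p₂.append p₃) ∧
      (∀ d ∈ p₁.darts, IsStarEdge lowCenter d.fst d.snd) ∧
      (∀ d ∈ p₂.darts, IsMidEdge d.fst d.snd) ∧
      ∀ d ∈ p₃.darts, IsStarEdge highCenter d.fst d.snd := by
  obtain ⟨u, p₁, r, rfl, h₁, hr⟩ := hp.exists_eq_append 2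
  obtain ⟨w, p₂, p₃, rfl, h₂, h₃⟩ := hp.of_append_right.exists_eq_append c
  have hc' : (2 : ℝ) ≤ c := by exact_mod_cast hc
  refine ⟨u, w, p₁, p₂, p₃, rfl, fun d hd => ?_, fun d hd => ?_, fun d hd => ?_⟩
  · have hlt : gel c s(d.fst, d.snd) < 2 := h₁ _ (List.mem_map_of_mem hd)
    rcases edge_trichotomy d.adj with h | h | h
    · exact h.2
    · linarith
    · linarith
  · have hlt : gel c s(d.fst, d.snd) < c := h₂ _ (List.mem_map_of_mem hd)
    have hle : 2 ≤ gel c s(d.fst, d.snd) :=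
      hr _ (by rw [Walk.edges_append]; exact List.mem_append_left _ (List.mem_map_of_mem hd))
    rcases edge_trichotomy d.adj with h | h | h
    · linarith
    · exact h.2.2
    · linarith
  · have hle : c ≤ gel c s(d.fst, d.snd) := h₃ _ (List.mem_map_of_mem hd)
    rcases edge_trichotomy d.adj with h | h | h
    · linarith
    · linarith
    · exact h.2

lemma isMid_of_isMidEdge {p : (FGadget c).Walk u w} (hp : ∀ d ∈ p.darts, IsMidEdge d.fst d.snd)
    (huw : u ≠ w) : IsMid u ∧ IsMid w :=
  ⟨(hp _ (p.firstDart_mem_darts (Walk.not_nil_of_ne huw))).2.1,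
    (hp _ (p.lastDart_mem_darts (Walk.not_nil_of_ne huw))).2.2⟩

/-- By uniqueness of star paths, `q` is the path `v_i v v_j`. -/
lemma not_isIncreasing_of_lt {i j : Fin (c - 1)} (hji : j < i)
    {q : (FGadget c).Walk (vi i) (vi j)} (hq : q.IsPath)
    (hqd : ∀ d ∈ q.darts, IsMidEdge d.fst d.snd) : ¬ IsIncreasing (FGadget c) (gel c) q := by
  have hpath : (Walk.cons (adj_v_vi i).symm (.cons (adj_v_vi j) .nil)).IsPath := by
    simp only [Walk.cons_isPath_iff, Walk.support_cons, Walk.support_nil, List.mem_cons,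
      List.not_mem_nil, Walk.IsPath.nil, true_and, or_false, not_or]
    simp [vi, v, hji.ne']
  obtain rfl := hq.eq_of_isStarEdge hpath (fun d hd => (hqd d hd).1) (by simp [IsStarEdge])
  rw [IsIncreasing.cons_cons_nil_iff]
  simpa [gelAux, v, vi] using hji

lemma not_isIncreasing_of_lowCenter_eq_of_highCenter_eq {q : (FGadget c).Walk u' w'}
    (hq : q.IsPath) (hqd : ∀ d ∈ q.darts, IsMidEdge d.fst d.snd) (hne : u' ≠ w')
    (hlow : lowCenter u = lowCenter u') (hhigh : highCenter u = highCenter w') :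
    ¬ IsIncreasing (FGadget c) (gel c) q := by
  obtain ⟨hu', hw'⟩ := isMid_of_isMidEdge hqd hne
  rw [hu'.lowCenter_eq] at hlow
  rw [hw'.highCenter_eq] at hhigh
  obtain ⟨i, j, hi, hj, hji⟩ :=
    exists_lt_of_isMid (hlow ▸ hu') (hhigh ▸ hw') (hlow ▸ hhigh ▸ hne)
  obtain rfl : u' = vi i := hlow.symm.trans hi
  obtain rfl : w' = vi j := hhigh.symm.trans hj
  exact not_isIncreasing_of_lt hji hq hqd

lemma eq_and_eq_of_isMidEdge {p : (FGadget c).Walk u w} {q : (FGadget c).Walk u' w'}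
    (hp : p.IsPath) (hq : q.IsPath) (hpd : ∀ d ∈ p.darts, IsMidEdge d.fst d.snd)
    (hqd : ∀ d ∈ q.darts, IsMidEdge d.fst d.snd) (hip : IsIncreasing (FGadget c) (gel c) p)
    (hiq : IsIncreasing (FGadget c) (gel c) q) (hlow : lowCenter u = lowCenter u')
    (hhigh : highCenter w = highCenter w') : u = u' ∧ w = w' := by
  by_cases huw : u = w <;> by_cases huw' : u' = w'
  · subst huw huw'
    have := eq_of_lowCenter_eq_of_highCenter_eq hlow hhigh
    exact ⟨this, this⟩
  · subst huw
    exact absurd hiq (not_isIncreasing_of_lowCenter_eq_of_highCenter_eq hq hqd huw' hlow hhigh)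
  · subst huw'
    exact absurd hip
      (not_isIncreasing_of_lowCenter_eq_of_highCenter_eq hp hpd huw hlow.symm hhigh.symm)
  · obtain ⟨hu, hw⟩ := isMid_of_isMidEdge hpd huw
    obtain ⟨hu', hw'⟩ := isMid_of_isMidEdge hqd huw'
    rw [hu.lowCenter_eq, hu'.lowCenter_eq] at hlow
    rw [hw.highCenter_eq, hw'.highCenter_eq] at hhigh
    exact ⟨hlow, hhigh⟩

theorem isGoodLabeling_gel (hc : 2 ≤ c) : IsGoodLabeling (FGadget c) (gel c) := by
  intro x y p q hp hq hip hiq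
  obtain ⟨u, w, p₁, p₂, p₃, rfl, hp₁, hp₂, hp₃⟩ := exists_eq_append_append hc hip
  obtain ⟨u', w', q₁, q₂, q₃, rfl, hq₁, hq₂, hq₃⟩ := exists_eq_append_append hc hiq
  obtain ⟨rfl, rfl⟩ := eq_and_eq_of_isMidEdge hp.of_append_right.of_append_left
    hq.of_append_right.of_append_left hp₂ hq₂ hip.of_append_right.of_append_left
    hiq.of_append_right.of_append_left
    ((p₁.apply_eq_of_isStarEdge hp₁).symm.trans (q₁.apply_eq_of_isStarEdge hq₁))
    ((p₃.apply_eq_of_isStarEdge hp₃).trans (q₃.apply_eq_of_isStarEdge hq₃).symm)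
  rw [hp.of_append_left.eq_of_isStarEdge hq.of_append_left hp₁ hq₁,
    hp.of_append_right.of_append_left.eq_of_isStarEdge hq.of_append_right.of_append_left
      (fun d hd => (hp₂ d hd).1) (fun d hd => (hq₂ d hd).1),
    hp.of_append_right.of_append_right.eq_of_isStarEdge hq.of_append_right.of_append_right
      hp₃ hq₃]

lemma gelAux_mem (hc : 1 ≤ c) (z z' : FVert c) :
    gelAux c z z' ∈ (Nat.cast : ℕ → ℝ) '' Set.Icc 1 c := by
  rcases z with _ | i | p | ⟨x, s⟩ <;> rcases z' with _ | i' | p' | ⟨x', t⟩ <;>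
    simp only [gelAux] <;> (try split_ifs) <;> first
    | exact ⟨1, ⟨le_rfl, hc⟩, Nat.cast_one⟩
    | exact ⟨c, ⟨hc, le_rfl⟩, rfl⟩
    | exact ⟨_, ⟨Nat.le_add_left 1 _, by omega⟩, Nat.cast_succ _⟩

lemma ncard_gel_le (hc : 1 ≤ c) : (gel c '' (FGadget c).edgeSet).ncard ≤ c := by
  have hsub : gel c '' (FGadget c).edgeSet ⊆ (Nat.cast : ℕ → ℝ) '' Set.Icc 1 c := by
    rintro _ ⟨e, -, rfl⟩
    induction e using Sym2.ind with
    | h z z' => exact gelAux_mem hc z z'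
  calc (gel c '' (FGadget c).edgeSet).ncard
      ≤ ((Nat.cast : ℕ → ℝ) '' Set.Icc 1 c).ncard :=
        Set.ncard_le_ncard hsub ((Set.finite_Icc _ _).image _)
    _ ≤ (Set.Icc 1 c).ncard := Set.ncard_image_le (Set.finite_Icc _ _)
    _ = c := by simp

/-- The edges `v v_i` and `v v_j` lie on the `4`-cycle `v_i v v_j v_{i,j}`. -/
lemma injective_label_v_vi (h : IsGoodLabeling (FGadget c) lab) :
    Function.Injective fun i => lab s(v, vi i) := by
  have key {i j : Fin (c - 1)} (hij : i < j) : lab s(v, vi i) ≠ lab s(v, vi j) := by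
    rw [Sym2.eq_swap]
    refine h.ne_of_cycle (adj_v_vi i).symm (adj_v_vi j)
      (adj_vi_vij (p := ⟨(i, j), hij⟩) (.inl rfl))
      (adj_vi_vij (p := ⟨(i, j), hij⟩) (.inr rfl)).symm ?_ (by simp [v, vij])
    simp [vi, hij.ne]
  intro i j hij
  by_contra hne
  rcases lt_or_gt_of_ne hne with hlt | hlt
  exacts [key hlt hij, key hlt hij.symm]

/-- Otherwise, writing `a = gad x 0` and `m_t = gad x t`, some `a m_t v` (`t = 1, 2`) and some
`a m_k v_x` (`k = 3, 4`) are not increasing, so `v m_t a` and `v v_x m_k a` are two increasing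
paths. -/
lemma not_le_and_le_extremal (h : IsGoodLabeling (FGadget c) lab)
    (x : {i : Fin (c - 1) // i.val ≠ 0}) :
    ¬ (lab s(v, vi x) ≤ lab s(vi x, gad x 3) ∧ lab s(v, vi x) ≤ lab s(vi x, gad x 4)) := by
  rintro ⟨h₃, h₄⟩
  obtain ⟨t, ht, hlt⟩ : ∃ t : Fin 5, (t = 1 ∨ t = 2) ∧
      lab s(gad x t, v) < lab s(gad x 0, gad x t) := by
    have := h.not_le_and_le (adj_gad_zero (x := x) (t := 1) (by decide)) (adj_gad_v (.inl rfl))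
      (adj_gad_zero (by decide)) (adj_gad_v (.inr rfl)) (by simp [gad, v]) (by simp [gad])
    rw [not_and_or, not_le, not_le] at this
    exact this.elim (⟨1, .inl rfl, ·⟩) (⟨2, .inr rfl, ·⟩)
  obtain ⟨k, hk, hlt'⟩ : ∃ k : Fin 5, (k = 3 ∨ k = 4) ∧
      lab s(gad x k, vi x) < lab s(gad x 0, gad x k) := by
    have := h.not_le_and_le (adj_gad_zero (x := x) (t := 3) (by decide)) (adj_gad_vi (.inl rfl))
      (adj_gad_zero (by decide)) (adj_gad_vi (.inr rfl)) (by simp [gad, vi]) (by simp [gad])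
    rw [not_and_or, not_le, not_le] at this
    exact this.elim (⟨3, .inl rfl, ·⟩) (⟨4, .inr rfl, ·⟩)
  have ht0 : t ≠ 0 := by rcases ht with rfl | rfl <;> decide
  have hk0 : k ≠ 0 := by rcases hk with rfl | rfl <;> decide
  refine h.not_le_and_le_and_le (adj_gad_v ht).symm (adj_gad_zero ht0).symm (adj_v_vi x)
    (adj_gad_vi hk).symm (adj_gad_zero hk0).symm (by simp [v, gad]) (by simp [v, gad])
    (by simp [vi, gad]) ⟨?_, ?_, ?_⟩
  · rw [Sym2.eq_swap (a := v), Sym2.eq_swap (a := gad x t) (b := gad x 0)]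
    exact hlt.le
  · rcases hk with rfl | rfl <;> assumption
  · rw [Sym2.eq_swap (a := vi x.1), Sym2.eq_swap (a := gad x k) (b := gad x 0)]
    exact hlt'.le

lemma label_v_vi_ne_one_and_ne
    (hlab : ∀ e ∈ (FGadget c).edgeSet, ∃ k : ℕ, 1 ≤ k ∧ k ≤ c ∧ lab e = k)
    (h : IsGoodLabeling (FGadget c) lab) {i : Fin (c - 1)} (hi : i.val ≠ 0) :
    lab s(v, vi i) ≠ 1 ∧ lab s(v, vi i) ≠ c := by
  have hle {t : Fin 5} (ht : t = 3 ∨ t = 4) :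
      1 ≤ lab s(vi i, gad ⟨i, hi⟩ t) ∧ lab s(vi i, gad ⟨i, hi⟩ t) ≤ c := by
    obtain ⟨k, hk₁, hkc, hk⟩ :=
      hlab _ ((FGadget c).mem_edgeSet.mpr (adj_gad_vi (x := ⟨i, hi⟩) ht).symm)
    rw [hk]
    exact ⟨by exact_mod_cast hk₁, by exact_mod_cast hkc⟩
  constructor
  · intro h1
    exact not_le_and_le_extremal h ⟨i, hi⟩
      ⟨h1 ▸ (hle (.inl rfl)).1, h1 ▸ (hle (.inr rfl)).1⟩
  · intro hc
    refine not_le_and_le_extremal h.neg ⟨i, hi⟩ ⟨?_, ?_⟩ <;>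
      simp only [Pi.neg_apply, neg_le_neg_iff, hc]
    exacts [(hle (.inl rfl)).2, (hle (.inr rfl)).2]

/-- Otherwise the `c - 1` distinct labels `λ(v v_i)` all lie in `{2, …, c - 1}`. -/
lemma label_v_vi_eq_one_or_eq
    (hlab : ∀ e ∈ (FGadget c).edgeSet, ∃ k : ℕ, 1 ≤ k ∧ k ≤ c ∧ lab e = k)
    (h : IsGoodLabeling (FGadget c) lab) {i₀ : Fin (c - 1)} (hi₀ : i₀.val = 0) :
    lab s(v, vi i₀) = 1 ∨ lab s(v, vi i₀) = c := by
  by_contra hbone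
  rw [not_or] at hbone
  have hmem (i : Fin (c - 1)) :
      lab s(v, vi i) ∈ (Finset.Icc 2 (c - 1)).image (Nat.cast : ℕ → ℝ) := by
    obtain ⟨h1, hc⟩ : lab s(v, vi i) ≠ 1 ∧ lab s(v, vi i) ≠ c := by
      by_cases hi : i.val = 0
      · rwa [Fin.ext (hi.trans hi₀.symm)]
      · exact label_v_vi_ne_one_and_ne hlab h hi
    obtain ⟨k, hk₁, hkc, hk⟩ := hlab _ ((FGadget c).mem_edgeSet.mpr (adj_v_vi i))
    rw [hk] at h1 hc ⊢
    have : k ≠ 1 := by rintro rfl; simp at h1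
    have : k ≠ c := by rintro rfl; simp at hc
    exact Finset.mem_image_of_mem _ (Finset.mem_Icc.mpr ⟨by omega, by omega⟩)
  have hcard := (Finset.card_le_card_of_injOn (s := Finset.univ) _ (fun i _ => hmem i)
    (injective_label_v_vi h).injOn).trans Finset.card_image_le
  simp only [Finset.card_univ, Fintype.card_fin, Nat.card_Icc] at hcard
  have := i₀.isLt
  omega

end FGadget

/-- For any `c ≥ 3`, the `c`-forced gadget `F_c` admits a `c`-gel, and for any good
edge-labeling of `F_c` with values in `{1, …, c}`, the label of the bone `v v_1` of `F_c`
is `1` or `c`. -/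
theorem forced_gadget (c : ℕ) (hc : 3 ≤ c) :
    (∃ lab : Sym2 (FVert c) → ℝ,
      IsGoodLabeling (FGadget c) lab ∧ (lab '' (FGadget c).edgeSet).ncard ≤ c) ∧
    (∀ lab : Sym2 (FVert c) → ℝ,
      (∀ e ∈ (FGadget c).edgeSet, ∃ k : ℕ, 1 ≤ k ∧ k ≤ c ∧ lab e = (k : ℝ)) →
      IsGoodLabeling (FGadget c) lab →
      lab s((Sum.inl () : FVert c), Sum.inr (Sum.inl (⟨0, by omega⟩ : Fin (c - 1)))) = 1 ∨
      lab s((Sum.inl () : FVert c), Sum.inr (Sum.inl (⟨0, by omega⟩ : Fin (c - 1)))) = (c : ℝ)) := by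
  constructor
  · exact ⟨FGadget.gel c, FGadget.isGoodLabeling_gel (by omega),
      FGadget.ncard_gel_le (by omega)⟩
  · intro lab hlab h
    exact FGadget.label_v_vi_eq_one_or_eq hlab h rfl
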